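/- Let R be an associative ring with identity in which 2 ≠ 0, and let n ≥ 3 be an integer. Let D be the subgroup of E_n(R) generated by the matrices A_{12}, A_{23}, …, A_{n−1,n}. Suppose G is a normal subgroup of E_n(R) containing some element A ∈ D with A ≠ I_n and A ≠ −I_n. Then E_n(R,2R) is contained in G. -/

import Mathlib

open Matrix

namespace Paper

/-! ### Generalities -/

lemma one_add_mul_aux {M : Type*} [Ring M] {x y : M} (h1 : x + y = 0) (h2 : x * y = 0) :
    (1 + x) * (1 + y) = 1 := by
  have h : (1 + x) * (1 + y) = 1 + (x + y) + x * y := by noncomm_ring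
  rw [h, h1, h2, add_zero, add_zero]

/-- The group of self-homeomorphisms of a topological space, under composition. -/
instance homeomorphGroup (X : Type*) [TopologicalSpace X] : Group (X ≃ₜ X) where
  mul a b := b.trans a
  one := Homeomorph.refl X
  inv := Homeomorph.symm
  mul_assoc a b c := rfl
  one_mul a := Homeomorph.ext fun x => rfl
  mul_one a := Homeomorph.ext fun x => rfl
  inv_mul_cancel a := Homeomorph.ext fun x => a.symm_apply_apply x

section Elementary

variable (R : Type*) [Ring R]

lemma stdBasis_cancel (n : ℕ) (i j : Fin n) (a : R) :
    Matrix.single i j a + Matrix.single i j (-a) = 0 := by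
  rw [← Matrix.single_add, add_neg_cancel, Matrix.single_zero]

/-- The elementary matrix `e_{ij}(r) = 1 + r·E_{ij}` as an invertible matrix,
i.e. an element of `GL_n(R)`. -/
def elemGL (n : ℕ) (i j : Fin n) (hij : i ≠ j) (r : R) : (Matrix (Fin n) (Fin n) R)ˣ where
  val := 1 + Matrix.single i j r
  inv := 1 + Matrix.single i j (-r)
  val_inv := one_add_mul_aux (stdBasis_cancel R n i j r)
    (Matrix.single_mul_single_of_ne (c := r) i j i (Ne.symm hij) (-r))
  inv_val := one_add_mul_aux
    (by have := stdBasis_cancel R n i j (-r); rwa [neg_neg] at this)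
    (Matrix.single_mul_single_of_ne (c := -r) i j i (Ne.symm hij) r)

/-- The elementary group `E_n(R)`: the subgroup of `GL_n(R)` generated by all
elementary matrices. -/
def ElementaryGroup (n : ℕ) : Subgroup (Matrix (Fin n) (Fin n) R)ˣ :=
  Subgroup.closure { A | ∃ (i j : Fin n) (hij : i ≠ j) (r : R), A = elemGL R n i j hij r }

lemma elemGL_mem (n : ℕ) (i j : Fin n) (hij : i ≠ j) (r : R) :
    elemGL R n i j hij r ∈ ElementaryGroup R n :=
  Subgroup.subset_closure ⟨i, j, hij, r, rfl⟩

/-- The diagonal matrix with `-1` at places `i`, `j` and `1` elsewhere. -/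
def negPairDiag (n : ℕ) (i j : Fin n) : Matrix (Fin n) (Fin n) R :=
  Matrix.diagonal fun k => if k = i ∨ k = j then -1 else 1

lemma negPairDiag_mul_self (n : ℕ) (i j : Fin n) :
    negPairDiag R n i j * negPairDiag R n i j = 1 := by
  rw [negPairDiag, Matrix.diagonal_mul_diagonal]
  have h : (fun k => (if k = i ∨ k = j then (-1 : R) else 1) *
      (if k = i ∨ k = j then (-1 : R) else 1)) = fun _ => (1 : R) := by
    funext k
    by_cases h : k = i ∨ k = j <;> simp [h]
  rw [h, Matrix.diagonal_one]

/-- The matrix `negPairDiag` as an invertible matrix. -/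
def negPairGL (n : ℕ) (i j : Fin n) : (Matrix (Fin n) (Fin n) R)ˣ :=
  ⟨negPairDiag R n i j, negPairDiag R n i j,
    negPairDiag_mul_self R n i j, negPairDiag_mul_self R n i j⟩

/-- The matrix `A_{i,i+1}` (0-indexed: diagonal entries `i` and `i+1` equal `-1`). -/
def APair (n : ℕ) (i : Fin (n - 1)) : (Matrix (Fin n) (Fin n) R)ˣ :=
  negPairGL R n ⟨(i : ℕ), by have := i.isLt; omega⟩ ⟨(i : ℕ) + 1, by have := i.isLt; omega⟩

/-- `E_n(R, 2R)`: the smallest normal subgroup of `E_n(R)` containing all elementary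
matrices `e_{ij}(s)` with `s ∈ 2R`. -/
def RelElementaryGroup (n : ℕ) : Subgroup ↥(ElementaryGroup R n) :=
  Subgroup.normalClosure
    { x : ↥(ElementaryGroup R n) | ∃ (i j : Fin n) (hij : i ≠ j) (r : R),
        x.val = elemGL R n i j hij (2 * r) }

end Elementary

section Symplectic

variable (S : Type*) [CommRing S]

/-- The index involution `σ` on `{0, …, 2n-1}`: `σk = k + n` if `k < n`, else `σk = k - n`. -/
def sigIdx (n : ℕ) (k : Fin (2 * n)) : Fin (2 * n) :=
  if h : (k : ℕ) < n then ⟨(k : ℕ) + n, by omega⟩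
  else ⟨(k : ℕ) - n, by have := k.isLt; omega⟩

lemma sigIdx_ne (n : ℕ) (k : Fin (2 * n)) : sigIdx n k ≠ k := by
  have hk := k.isLt
  unfold sigIdx
  split_ifs with h <;>
    · intro hEq
      have h2 := congrArg Fin.val hEq
      simp only [Fin.val_mk] at h2 -- may need adjusting
      omega

lemma sigIdx_inj (n : ℕ) {k l : Fin (2 * n)} (h : k ≠ l) : sigIdx n k ≠ sigIdx n l := by
  have hk := k.isLt
  have hl := l.isLt
  have hkl : (k : ℕ) ≠ (l : ℕ) := fun hc => h (Fin.ext hc)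
  unfold sigIdx
  split_ifs with h1 h2 h2 <;>
    · intro hEq
      have h3 := congrArg Fin.val hEq
      simp only [Fin.val_mk] at h3
      omega

/-- The symplectic elementary matrix `ρ_{ij}(a)`, as a matrix.  When `j = σi` it is
`1 + a E_{i,σi}`; otherwise it is `1 + a E_{ij} - δ a E_{σj,σi}` where `δ = 1` if `i, j`
are on the same side of `n` and `δ = -1` otherwise. -/
def symElemMat (n : ℕ) (i j : Fin (2 * n)) (a : S) : Matrix (Fin (2 * n)) (Fin (2 * n)) S :=
  if j = sigIdx n i then 1 + Matrix.single i j a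
  else 1 + Matrix.single i j a -
    Matrix.single (sigIdx n j) (sigIdx n i)
      ((if ((i : ℕ) < n ↔ (j : ℕ) < n) then 1 else -1) * a)

lemma symElemMat_mul_neg (n : ℕ) (i j : Fin (2 * n)) (hij : i ≠ j) (a : S) :
    symElemMat S n i j a * symElemMat S n i j (-a) = 1 := by
  unfold symElemMat
  set d : S := if ((i : ℕ) < n ↔ (j : ℕ) < n) then 1 else -1 with hd
  split_ifs with h
  · exact one_add_mul_aux (stdBasis_cancel S _ i j a)
      (Matrix.single_mul_single_of_ne (c := a) i j i (Ne.symm hij) (-a))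
  · rw [add_sub_assoc, add_sub_assoc]
    apply one_add_mul_aux
    · have c1 := stdBasis_cancel S _ i j a
      have c2 := stdBasis_cancel S _ (sigIdx n j) (sigIdx n i) (d * a)
      rw [mul_neg]
      calc Matrix.single i j a - Matrix.single (sigIdx n j) (sigIdx n i) (d * a) +
            (Matrix.single i j (-a) - Matrix.single (sigIdx n j) (sigIdx n i) (-(d * a)))
          = (Matrix.single i j a + Matrix.single i j (-a)) -
            (Matrix.single (sigIdx n j) (sigIdx n i) (d * a) +
              Matrix.single (sigIdx n j) (sigIdx n i) (-(d * a))) := by abel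
        _ = 0 := by rw [c1, c2, sub_zero]
    · simp only [sub_mul, mul_sub]
      rw [Matrix.single_mul_single_of_ne (c := a) i j i (Ne.symm hij) (-a),
        Matrix.single_mul_single_of_ne (c := a) i j (sigIdx n j) (Ne.symm (sigIdx_ne n j)) (d * -a),
        Matrix.single_mul_single_of_ne (c := d * a) (sigIdx n j) (sigIdx n i) i (sigIdx_ne n i) (-a),
        Matrix.single_mul_single_of_ne (c := d * a) (sigIdx n j) (sigIdx n i) (sigIdx n j)
          (sigIdx_inj n hij) (d * -a)]
      simp

/-- The symplectic elementary matrix `ρ_{ij}(a)` as an invertible matrix. -/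
def symElemGL (n : ℕ) (i j : Fin (2 * n)) (hij : i ≠ j) (a : S) :
    (Matrix (Fin (2 * n)) (Fin (2 * n)) S)ˣ where
  val := symElemMat S n i j a
  inv := symElemMat S n i j (-a)
  val_inv := symElemMat_mul_neg S n i j hij a
  inv_val := by have := symElemMat_mul_neg S n i j hij (-a); rwa [neg_neg] at this

/-- The elementary symplectic group `Ep_{2n}(S)`, generated by all symplectic
elementary matrices. -/
def EpGroup (n : ℕ) : Subgroup (Matrix (Fin (2 * n)) (Fin (2 * n)) S)ˣ :=
  Subgroup.closure
    { A | ∃ (i j : Fin (2 * n)) (hij : i ≠ j) (a : S), A = symElemGL S n i j hij a }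

/-- The matrix `J = [[0, I_n], [-I_n, 0]]` of the standard symplectic form. -/
def Jmat (n : ℕ) : Matrix (Fin (2 * n)) (Fin (2 * n)) S :=
  Matrix.of fun i j =>
    if (i : ℕ) + n = (j : ℕ) then 1 else if (j : ℕ) + n = (i : ℕ) then -1 else 0

/-- The symplectic group `Sp_{2n}(S)`: invertible `2n × 2n` matrices `M` with
`Mᵀ * J * M = J`. -/
def SpGroup (n : ℕ) : Subgroup (Matrix (Fin (2 * n)) (Fin (2 * n)) S)ˣ where
  carrier := { M | (↑M : Matrix (Fin (2 * n)) (Fin (2 * n)) S)ᵀ * Jmat S n * ↑M = Jmat S n }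
  one_mem' := by simp
  mul_mem' := by
    intro a b ha hb
    show (↑(a * b) : Matrix (Fin (2 * n)) (Fin (2 * n)) S)ᵀ * Jmat S n *
      (↑(a * b) : Matrix (Fin (2 * n)) (Fin (2 * n)) S) = Jmat S n
    rw [Units.val_mul, Matrix.transpose_mul]
    calc (↑b : Matrix (Fin (2*n)) (Fin (2*n)) S)ᵀ * (↑a : Matrix (Fin (2*n)) (Fin (2*n)) S)ᵀ *
          Jmat S n * (↑a * ↑b)
        = (↑b : Matrix (Fin (2*n)) (Fin (2*n)) S)ᵀ *
            ((↑a : Matrix (Fin (2*n)) (Fin (2*n)) S)ᵀ * Jmat S n * ↑a) * ↑b := by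
          noncomm_ring
      _ = (↑b : Matrix (Fin (2*n)) (Fin (2*n)) S)ᵀ * Jmat S n * ↑b := by rw [ha]
      _ = Jmat S n := hb
  inv_mem' := by
    intro a ha
    have ha' : (↑a : Matrix (Fin (2 * n)) (Fin (2 * n)) S)ᵀ * Jmat S n *
        (↑a : Matrix (Fin (2 * n)) (Fin (2 * n)) S) = Jmat S n := ha
    show ((a⁻¹ : (Matrix (Fin (2 * n)) (Fin (2 * n)) S)ˣ) :
        Matrix (Fin (2 * n)) (Fin (2 * n)) S)ᵀ * Jmat S n *
        ((a⁻¹ : (Matrix (Fin (2 * n)) (Fin (2 * n)) S)ˣ) :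
        Matrix (Fin (2 * n)) (Fin (2 * n)) S) = Jmat S n
    set A : Matrix (Fin (2 * n)) (Fin (2 * n)) S := ↑a with hA
    set B : Matrix (Fin (2 * n)) (Fin (2 * n)) S := ((a⁻¹ :
        (Matrix (Fin (2 * n)) (Fin (2 * n)) S)ˣ) : Matrix (Fin (2 * n)) (Fin (2 * n)) S) with hB
    have h1 : A * B = 1 := a.mul_inv
    calc Bᵀ * Jmat S n * B
        = Bᵀ * (Aᵀ * Jmat S n * A) * B := by rw [ha']
      _ = (A * B)ᵀ * Jmat S n * (A * B) := by rw [Matrix.transpose_mul]; noncomm_ring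
      _ = Jmat S n := by rw [h1]; simp

end Symplectic

section Extra

variable (R : Type*) [Ring R]

/-- Index of the `(2i-1)`-th row (1-indexed), i.e. `2i` 0-indexed. -/
def bIdx0 (k : ℕ) (i : Fin k) : Fin (2 * k) := ⟨2 * (i : ℕ), by have := i.isLt; omega⟩

def bIdx1 (k : ℕ) (i : Fin k) : Fin (2 * k) := ⟨2 * (i : ℕ) + 1, by have := i.isLt; omega⟩

lemma bIdx_ne (k : ℕ) (i : Fin k) : bIdx0 k i ≠ bIdx1 k i := by
  simp only [bIdx0, bIdx1, ne_eq, Fin.mk.injEq]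
  omega

/-- The matrix `B_i = e_{2i-1,2i}(1) e_{2i,2i-1}(-1) e_{2i-1,2i}(1) e_{2i,2i-1}(-1)`
(1-indexed) in `E_{2k}(R)`. -/
def Bmat (k : ℕ) (i : Fin k) : (Matrix (Fin (2 * k)) (Fin (2 * k)) R)ˣ :=
  elemGL R (2 * k) (bIdx0 k i) (bIdx1 k i) (bIdx_ne k i) 1 *
  elemGL R (2 * k) (bIdx1 k i) (bIdx0 k i) (bIdx_ne k i).symm (-1) *
  elemGL R (2 * k) (bIdx0 k i) (bIdx1 k i) (bIdx_ne k i) 1 *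
  elemGL R (2 * k) (bIdx1 k i) (bIdx0 k i) (bIdx_ne k i).symm (-1)

end Extra

section SymplecticExtra

variable (S : Type*) [CommRing S]

def cIdx0 (n : ℕ) (i : Fin n) : Fin (2 * n) := ⟨(i : ℕ), by have := i.isLt; omega⟩

def cIdx1 (n : ℕ) (i : Fin n) : Fin (2 * n) := ⟨n + (i : ℕ), by have := i.isLt; omega⟩

lemma cIdx_ne (n : ℕ) (i : Fin n) : cIdx0 n i ≠ cIdx1 n i := by
  have := i.pos
  simp only [cIdx0, cIdx1, ne_eq, Fin.mk.injEq]
  omega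

/-- The matrix `C_i = ρ_{i,n+i}(1) ρ_{n+i,i}(-1) ρ_{i,n+i}(1) ρ_{n+i,i}(-1)` in
`Sp_{2n}(S)`. -/
def Cmat (n : ℕ) (i : Fin n) : (Matrix (Fin (2 * n)) (Fin (2 * n)) S)ˣ :=
  symElemGL S n (cIdx0 n i) (cIdx1 n i) (cIdx_ne n i) 1 *
  symElemGL S n (cIdx1 n i) (cIdx0 n i) (cIdx_ne n i).symm (-1) *
  symElemGL S n (cIdx0 n i) (cIdx1 n i) (cIdx_ne n i) 1 *
  symElemGL S n (cIdx1 n i) (cIdx0 n i) (cIdx_ne n i).symm (-1)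

/-- The equivalence `Fin n ⊕ Fin n ≃ Fin (2 * n)`. -/
def finDouble (n : ℕ) : Fin n ⊕ Fin n ≃ Fin (2 * n) :=
  finSumFinEquiv.trans (finCongr (two_mul n).symm)

/-- The block-diagonal matrix `diag(A, B)` as a `2n × 2n` matrix. -/
def blockDiag2 (n : ℕ) (A B : Matrix (Fin n) (Fin n) S) :
    Matrix (Fin (2 * n)) (Fin (2 * n)) S :=
  Matrix.reindex (finDouble n) (finDouble n) (Matrix.fromBlocks A 0 0 B)

lemma blockDiag2_mul (n : ℕ) (A B A' B' : Matrix (Fin n) (Fin n) S) :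
    blockDiag2 S n A B * blockDiag2 S n A' B' = blockDiag2 S n (A * A') (B * B') := by
  unfold blockDiag2
  rw [Matrix.reindex_apply, Matrix.reindex_apply, Matrix.reindex_apply,
    Matrix.submatrix_mul_equiv, Matrix.fromBlocks_multiply]
  simp

lemma blockDiag2_one (n : ℕ) : blockDiag2 S n 1 1 = 1 := by
  unfold blockDiag2
  rw [Matrix.reindex_apply, Matrix.fromBlocks_one, Matrix.submatrix_one_equiv]

/-- The hyperbolic embedding `A ↦ diag(A, (Aᵀ)⁻¹) = diag(A, (A⁻¹)ᵀ)` from `GL_n(S)`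
to `GL_{2n}(S)`. -/
def hypGL (n : ℕ) (A : (Matrix (Fin n) (Fin n) S)ˣ) :
    (Matrix (Fin (2 * n)) (Fin (2 * n)) S)ˣ where
  val := blockDiag2 S n ↑A ((↑(A⁻¹) : Matrix (Fin n) (Fin n) S)ᵀ)
  inv := blockDiag2 S n ↑(A⁻¹) ((↑A : Matrix (Fin n) (Fin n) S)ᵀ)
  val_inv := by
    rw [blockDiag2_mul, ← Matrix.transpose_mul, A.mul_inv, Matrix.transpose_one,
      blockDiag2_one]
  inv_val := by
    rw [blockDiag2_mul, ← Matrix.transpose_mul, A.inv_mul, Matrix.transpose_one,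
      blockDiag2_one]

end SymplecticExtra


/-! Every element of `D` is a diagonal matrix `diag(ε)` with `ε_k = ±1`. Since `A ≠ ±I`, there
are `i ≠ j` with `ε_i = -1` and `ε_j = 1`, so conjugation by `A` inverts every `x = e_{ij}(r)`;
then `e_{ij}(2r) = x ^ 2 = ⁅x, A⁆` lies in the normal subgroup `G`. For `n ≥ 3` the relations
`⁅e_{ij}(a), e_{jk}(b)⁆ = e_{ik}(ab)` move `e_{ij}(2r)` into every position `(k, l)`. -/

open scoped commutatorElement

section Elementary

variable {R : Type*} [Ring R] {n : ℕ}

lemma one_add_single_mul_one_add_single {i j : Fin n} (hij : i ≠ j) (a b : R) :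
    (1 + single i j a) * (1 + single i j b) = 1 + single i j (a + b) := by
  simp [add_mul, mul_add, single_mul_single_of_ne, hij.symm, single_add, add_assoc]

lemma one_add_single_commutator {i j k : Fin n} (hij : i ≠ j) (hjk : j ≠ k) (hik : i ≠ k)
    (a b : R) :
    (1 + single i j a) * (1 + single j k b) * (1 + single i j (-a)) * (1 + single j k (-b)) =
      1 + single i k (a * b) := by
  simp only [add_mul, mul_add, one_mul, mul_one, single_mul_single_same, ← single_neg,
    single_mul_single_of_ne, ne_eq, hij.symm, hjk.symm, hik.symm, not_false_eq_true, neg_mul,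
    mul_neg, add_zero]
  abel

def elem (i j : Fin n) (hij : i ≠ j) (r : R) : ElementaryGroup R n :=
  ⟨elemGL R n i j hij r, elemGL_mem R n i j hij r⟩

lemma elem_mul {i j : Fin n} (hij : i ≠ j) (a b : R) :
    elem i j hij a * elem i j hij b = elem i j hij (a + b) :=
  Subtype.ext <| Units.ext <| one_add_single_mul_one_add_single hij a b

lemma elem_inv {i j : Fin n} (hij : i ≠ j) (r : R) :
    (elem i j hij r)⁻¹ = elem i j hij (-r) :=
  Subtype.ext <| Units.ext rfl

lemma elem_sq {i j : Fin n} (hij : i ≠ j) (r : R) :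
    elem i j hij r ^ 2 = elem i j hij (2 * r) := by
  rw [sq, elem_mul, two_mul]

lemma commutatorElement_elem {i j k : Fin n} (hij : i ≠ j) (hjk : j ≠ k) (hik : i ≠ k)
    (a b : R) :
    ⁅elem i j hij a, elem j k hjk b⁆ = elem i k hik (a * b) := by
  rw [commutatorElement_def, elem_inv, elem_inv]
  exact Subtype.ext <| Units.ext <| one_add_single_commutator hij hjk hik a b

end Elementary

section NormalSubgroup

variable {G : Type*} [Group G] {N : Subgroup G}

lemma _root_.Subgroup.Normal.commutatorElement_mem_left (hN : N.Normal) {g : G} (hg : g ∈ N)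
    (h : G) : ⁅g, h⁆ ∈ N := by
  rw [commutatorElement_def, mul_assoc g h, mul_assoc g]
  exact N.mul_mem hg (hN.conj_mem _ (N.inv_mem hg) h)

lemma _root_.Subgroup.Normal.commutatorElement_mem_right (hN : N.Normal) (g : G) {h : G}
    (hh : h ∈ N) : ⁅g, h⁆ ∈ N := by
  rw [commutatorElement_def]
  exact N.mul_mem (hN.conj_mem _ hh g) (N.inv_mem hh)

lemma _root_.Subgroup.Normal.sq_mem_of_conj_eq_inv (hN : N.Normal) {a x : G} (ha : a ∈ N)
    (h : a * x * a⁻¹ = x⁻¹) : x ^ 2 ∈ N := by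
  have h' : a * x⁻¹ * a⁻¹ = x := by simpa [mul_assoc] using congrArg Inv.inv h
  have : ⁅x, a⁆ = x ^ 2 := by
    calc ⁅x, a⁆ = x * (a * x⁻¹ * a⁻¹) := by rw [commutatorElement_def]; group
      _ = x ^ 2 := by rw [h', sq]
  exact this ▸ hN.commutatorElement_mem_right x ha

end NormalSubgroup

section Propagation

variable {R : Type*} [Ring R] {n : ℕ} {G : Subgroup (ElementaryGroup R n)}

lemma elem_mem_of_elem_mem_row (hG : G.Normal) {i j : Fin n} {hij : i ≠ j} {s : R}
    (hs : elem i j hij s ∈ G) {l : Fin n} (hil : i ≠ l) : elem i l hil s ∈ G := by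
  obtain rfl | hjl := eq_or_ne j l
  · exact hs
  · simpa [commutatorElement_elem hij hjl hil] using
      hG.commutatorElement_mem_left hs (elem j l hjl 1)

lemma elem_mem_of_elem_mem_col (hG : G.Normal) {i j : Fin n} {hij : i ≠ j} {s : R}
    (hs : elem i j hij s ∈ G) {k : Fin n} (hkj : k ≠ j) : elem k j hkj s ∈ G := by
  obtain rfl | hki := eq_or_ne k i
  · exact hs
  · simpa [commutatorElement_elem hki hij hkj] using
      hG.commutatorElement_mem_right (elem k i hki 1) hs

lemma elem_mem_of_elem_mem (hn : 3 ≤ n) (hG : G.Normal) {i j : Fin n} {hij : i ≠ j} {s : R}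
    (hs : elem i j hij s ∈ G) {k l : Fin n} (hkl : k ≠ l) : elem k l hkl s ∈ G := by
  obtain ⟨m, hmi, hmk⟩ := ENat.exists_ne_ne_of_three_le (by simpa using hn) i k
  have him : elem i m hmi.symm s ∈ G := elem_mem_of_elem_mem_row hG hs hmi.symm
  have hkm : elem k m hmk.symm s ∈ G := elem_mem_of_elem_mem_col hG him hmk.symm
  exact elem_mem_of_elem_mem_row hG hkm hkl

end Propagation

section SignDiagonal

variable (R : Type*) [Ring R] (n : ℕ)

def signDiagonal : (Fin n → ℤˣ) →* (Matrix (Fin n) (Fin n) R)ˣ where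
  toFun ε :=
    { val := diagonal fun k => ((ε k : ℤ) : R)
      inv := diagonal fun k => ((ε k : ℤ) : R)
      val_inv := by simp [diagonal_mul_diagonal, ← Int.cast_mul]
      inv_val := by simp [diagonal_mul_diagonal, ← Int.cast_mul] }
  map_one' := Units.ext <| by simp
  map_mul' _ _ := Units.ext <| by simp [diagonal_mul_diagonal]

variable {R n}

lemma val_signDiagonal (ε : Fin n → ℤˣ) :
    (signDiagonal R n ε : Matrix (Fin n) (Fin n) R) = diagonal fun k => ((ε k : ℤ) : R) :=
  rfl

lemma diagonal_mul_single_mul_diagonal (d d' : Fin n → R) (i j : Fin n) (r : R) :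
    diagonal d * single i j r * diagonal d' = single i j (d i * r * d' j) := by
  ext a b
  rw [mul_diagonal, diagonal_mul]
  by_cases ha : i = a <;> by_cases hb : j = b <;> simp [ha, hb]

lemma signDiagonal_mul_elemGL_mul_inv (ε : Fin n → ℤˣ) {i j : Fin n} (hij : i ≠ j) (r : R) :
    signDiagonal R n ε * elemGL R n i j hij r * (signDiagonal R n ε)⁻¹ =
      elemGL R n i j hij (((ε i * ε j : ℤˣ) : ℤ) * r) := by
  have hinv : (signDiagonal R n ε)⁻¹ = signDiagonal R n ε := by
    rw [← map_inv]
    congr 1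
    exact funext fun k => Int.units_inv_eq_self (ε k)
  ext1
  rw [hinv, Units.val_mul, Units.val_mul, elemGL, mul_add, add_mul, mul_one, ← Units.val_mul,
    ← map_mul, show ε * ε = 1 from funext fun k => Int.units_mul_self (ε k), map_one,
    Units.val_one, val_signDiagonal, diagonal_mul_single_mul_diagonal, mul_assoc,
    ← Int.cast_comm, ← mul_assoc, ← Int.cast_mul, ← Units.val_mul]
  rfl

lemma APair_mem_range_signDiagonal (i : Fin (n - 1)) :
    APair R n i ∈ (signDiagonal R n).range := by
  refine ⟨fun k => if k = ⟨i, by omega⟩ ∨ k = ⟨i + 1, by omega⟩ then -1 else 1, Units.ext ?_⟩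
  simp [val_signDiagonal, APair, negPairGL, negPairDiag, apply_ite]

lemma closure_APair_le :
    Subgroup.closure {x : ElementaryGroup R n | ∃ i, x.val = APair R n i} ≤
      (signDiagonal R n).range.comap (ElementaryGroup R n).subtype :=
  Subgroup.closure_le _ |>.2 fun x ⟨i, hx⟩ => by
    rw [SetLike.mem_coe, Subgroup.mem_comap, Subgroup.coe_subtype, hx]
    exact APair_mem_range_signDiagonal i

end SignDiagonal

theorem statement1_general (R : Type*) [Ring R] (n : ℕ) (hn : 3 ≤ n)
    (G : Subgroup ↥(ElementaryGroup R n)) (hG : G.Normal)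
    (A : ↥(ElementaryGroup R n))
    (hAD : A ∈ Subgroup.closure
      { x : ↥(ElementaryGroup R n) | ∃ i : Fin (n - 1), x.val = APair R n i })
    (hA1 : (A.val.val : Matrix (Fin n) (Fin n) R) ≠ 1)
    (hA2 : (A.val.val : Matrix (Fin n) (Fin n) R) ≠ -1)
    (hAG : A ∈ G) :
    RelElementaryGroup R n ≤ G := by
  obtain ⟨ε, hε⟩ : ∃ ε, signDiagonal R n ε = A := closure_APair_le hAD
  obtain ⟨i, hi⟩ : ∃ i, ε i = -1 := by
    by_contra! h
    have : ε = 1 := funext fun k => (Int.units_eq_one_or _).resolve_right (h k)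
    exact hA1 (by rw [← hε, this, map_one, Units.val_one])
  obtain ⟨j, hj⟩ : ∃ j, ε j = 1 := by
    by_contra! h
    have : ε = fun _ => -1 := funext fun k => (Int.units_eq_one_or _).resolve_left (h k)
    exact hA2 (by simp [← hε, this, val_signDiagonal, ← diagonal_one, diagonal_neg])
  have hij : i ≠ j := by
    rintro rfl
    exact absurd (hi.symm.trans hj) (by decide)
  have hconj (r : R) : A * elem i j hij r * A⁻¹ = (elem i j hij r)⁻¹ := by
    ext1
    simp only [Subgroup.coe_mul, Subgroup.coe_inv, elem_inv, ← hε]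
    rw [elem, signDiagonal_mul_elemGL_mul_inv, hi, hj]
    simp [elem]
  have hbase (r : R) : elem i j hij (2 * r) ∈ G :=
    elem_sq hij r ▸ hG.sq_mem_of_conj_eq_inv hAG (hconj r)
  have := hG
  refine Subgroup.normalClosure_le_normal ?_
  rintro x ⟨k, l, hkl, r, hx⟩
  rw [show x = elem k l hkl (2 * r) from Subtype.ext hx]
  exact elem_mem_of_elem_mem hn hG (hbase r) hkl

/-- If a normal subgroup `G` of `E_n(R)` (`n ≥ 3`, `2 ≠ 0` in `R`)
contains an element of the subgroup generated by `A_{12}, …, A_{n-1,n}` other than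
`±I_n`, then `E_n(R, 2R) ≤ G`. -/
theorem statement1 (R : Type*) [Ring R] (h2 : (2 : R) ≠ 0) (n : ℕ) (hn : 3 ≤ n)
    (G : Subgroup ↥(ElementaryGroup R n)) (hG : G.Normal)
    (A : ↥(ElementaryGroup R n))
    (hAD : A ∈ Subgroup.closure
      { x : ↥(ElementaryGroup R n) | ∃ i : Fin (n - 1), x.val = APair R n i })
    (hA1 : (A.val.val : Matrix (Fin n) (Fin n) R) ≠ 1)
    (hA2 : (A.val.val : Matrix (Fin n) (Fin n) R) ≠ -1)
    (hAG : A ∈ G) :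
    RelElementaryGroup R n ≤ G :=
  statement1_general R n hn G hG A hAD hA1 hA2 hAG

end Paper
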